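/- arXiv:cs/0307005 — 5 statements merged into one kernel-verified Lean document; each statement's English description precedes it below -/
import Mathlib

section
/- (Ellipse Lemma) Let C : [0,1] → ℝ² be 1-Lipschitz, let 0 ≤ x₁ ≤ x₂ ≤ x₃ ≤ x₄ ≤ 1, and let 0 < a < d. If there exist points q₁ ∈ E_C(x₁,x₂) and q₂ ∈ E_C(x₃,x₄) with ‖q₁‖ ≤ d and ‖q₂‖ ≤ d, and ‖C(x₂)‖ ≥ d + a, then there exists a point p ∈ E_C(x₁,x₄) with ‖p‖ ≤ d − a. -/
open RealInnerProductSpace in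
private lemma key_contract (u z : EuclideanSpace ℝ (Fin 2)) (d a : ℝ)
    (ha : 0 < a) (had : a < d) (hu : ‖u‖ ≤ d) (hz : d + a ≤ ‖z‖) :
    ‖u - ((d - a) / ‖z‖) • z‖ ≤ ‖u - z‖ := by
  set r := ‖z‖ with hr
  have hrpos : 0 < r := lt_of_lt_of_le (by linarith) hz
  set c : ℝ := (d - a) / r with hc
  have hc0 : 0 ≤ c := div_nonneg (by linarith) hrpos.le
  have hcr : c * r = d - a := div_mul_cancel₀ _ hrpos.ne'
  have hτ : ⟪u, z⟫ ≤ d * r := le_trans (real_inner_le_norm u z)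
    (mul_le_mul_of_nonneg_right hu (norm_nonneg z))
  have hc1 : c ≤ 1 := by
    rw [hc, div_le_one hrpos]; linarith
  have hsq : ‖u - c • z‖ ^ 2 ≤ ‖u - z‖ ^ 2 := by
    have e1 : ‖u - c • z‖ ^ 2 = ‖u‖ ^ 2 - 2 * (c * ⟪u, z⟫) + (c * r) ^ 2 := by
      rw [norm_sub_sq_real, real_inner_smul_right, norm_smul, Real.norm_eq_abs,
        abs_of_nonneg hc0]
    have e2 : ‖u - z‖ ^ 2 = ‖u‖ ^ 2 - 2 * ⟪u, z⟫ + r ^ 2 := by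
      rw [norm_sub_sq_real]
    rw [e1, e2]
    nlinarith [mul_le_mul_of_nonneg_left hτ (by linarith : (0:ℝ) ≤ 1 - c)]
  calc ‖u - c • z‖ = Real.sqrt (‖u - c • z‖ ^ 2) := (Real.sqrt_sq (norm_nonneg _)).symm
    _ ≤ Real.sqrt (‖u - z‖ ^ 2) := Real.sqrt_le_sqrt hsq
    _ = ‖u - z‖ := Real.sqrt_sq (norm_nonneg _)

theorem stmt_3 (C : ℝ → EuclideanSpace ℝ (Fin 2))
    (hC : ∀ a ∈ Set.Icc (0:ℝ) 1, ∀ b ∈ Set.Icc (0:ℝ) 1, ‖C a - C b‖ ≤ |a - b|)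
    (x₁ x₂ x₃ x₄ : ℝ) (h0 : 0 ≤ x₁) (h1 : x₁ ≤ x₂) (h2 : x₂ ≤ x₃)
    (h3 : x₃ ≤ x₄) (h4 : x₄ ≤ 1)
    (d a : ℝ) (ha : 0 < a) (had : a < d)
    (hq₁ : ∃ q₁ : EuclideanSpace ℝ (Fin 2),
      ‖C x₁ - q₁‖ + ‖C x₂ - q₁‖ ≤ x₂ - x₁ ∧ ‖q₁‖ ≤ d)
    (hq₂ : ∃ q₂ : EuclideanSpace ℝ (Fin 2),
      ‖C x₃ - q₂‖ + ‖C x₄ - q₂‖ ≤ x₄ - x₃ ∧ ‖q₂‖ ≤ d)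
    (hC2 : ‖C x₂‖ ≥ d + a) :
    ∃ p : EuclideanSpace ℝ (Fin 2),
      ‖C x₁ - p‖ + ‖C x₄ - p‖ ≤ x₄ - x₁ ∧ ‖p‖ ≤ d - a := by
  obtain ⟨q₁, hq1e, hq1d⟩ := hq₁
  obtain ⟨q₂, hq2e, hq2d⟩ := hq₂
  have hrpos : (0:ℝ) < ‖C x₂‖ := lt_of_lt_of_le (by linarith) hC2
  refine ⟨((d - a) / ‖C x₂‖) • C x₂, ?_, ?_⟩
  · -- ellipse bound
    have hk1 : ‖q₁ - ((d - a) / ‖C x₂‖) • C x₂‖ ≤ ‖q₁ - C x₂‖ :=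
      key_contract q₁ (C x₂) d a ha had hq1d hC2
    have hk2 : ‖q₂ - ((d - a) / ‖C x₂‖) • C x₂‖ ≤ ‖q₂ - C x₂‖ :=
      key_contract q₂ (C x₂) d a ha had hq2d hC2
    have h23 : ‖C x₂ - C x₃‖ ≤ x₃ - x₂ := by
      have := hC x₂ ⟨by linarith, by linarith⟩ x₃ ⟨by linarith, by linarith⟩
      rwa [abs_of_nonpos (by linarith), neg_sub] at this
    have t1 : ‖C x₁ - ((d - a) / ‖C x₂‖) • C x₂‖ ≤
        ‖C x₁ - q₁‖ + ‖q₁ - ((d - a) / ‖C x₂‖) • C x₂‖ := norm_sub_le_norm_sub_add_norm_sub _ _ _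
    have t2 : ‖C x₄ - ((d - a) / ‖C x₂‖) • C x₂‖ ≤
        ‖C x₄ - q₂‖ + ‖q₂ - ((d - a) / ‖C x₂‖) • C x₂‖ := norm_sub_le_norm_sub_add_norm_sub _ _ _
    have t3 : ‖q₂ - C x₂‖ ≤ ‖q₂ - C x₃‖ + ‖C x₃ - C x₂‖ := norm_sub_le_norm_sub_add_norm_sub _ _ _
    have e1 : ‖q₁ - C x₂‖ = ‖C x₂ - q₁‖ := norm_sub_rev _ _
    have e2 : ‖q₂ - C x₃‖ = ‖C x₃ - q₂‖ := norm_sub_rev _ _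
    have e3 : ‖C x₃ - C x₂‖ = ‖C x₂ - C x₃‖ := norm_sub_rev _ _
    linarith
  · -- norm bound
    rw [norm_smul, Real.norm_eq_abs, abs_of_nonneg (div_nonneg (by linarith) hrpos.le),
      div_mul_cancel₀ _ hrpos.ne']
end

section
/- Let C : [0,1] → ℝ² be 1-Lipschitz, let 0 ≤ x₁ ≤ x₂ ≤ x₃ ≤ x₄ ≤ 1, and let 0 < ε/2 < d. If closest-possible(x₁,x₂) ≤ d, closest-possible(x₃,x₄) ≤ d, and ‖C(x₂)‖ > d + ε/2, then closest-possible(x₁,x₄) < d − ε/2. -/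
noncomputable def closestPossible (C : ℝ → EuclideanSpace ℝ (Fin 2)) (a b : ℝ) : ℝ :=
  sInf ((fun p => ‖p‖) '' {p : EuclideanSpace ℝ (Fin 2) | ‖C a - p‖ + ‖C b - p‖ ≤ b - a})

/-!
Pick points `p₁ ∈ E_C(x₁,x₂)` and `p₂ ∈ E_C(x₃,x₄)` of norm at most `ρ`, slightly above `d`.
Both lie in the ball of radius `ρ`, while `w = C(x₂)` lies outside it; the point `z` of the
segment `[0, w]` with `‖z‖ = max (2ρ - ‖w‖) 0` is then at least as close to every point of that
ball as `w` is. Replacing the detour `C(x₁) → p₁ → C(x₂) → C(x₃) → p₂ → C(x₄)` through `C(x₂)`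
by one through `z` shows `z ∈ E_C(x₁,x₄)`, and `‖z‖ < d - ε/2` because `‖w‖ > d + ε/2`.
-/

open Set

section Shrink

variable {E : Type*} [NormedAddCommGroup E] [InnerProductSpace ℝ E]

theorem norm_sub_smul_le_norm_sub {f w : E} {s : ℝ} (hs₀ : 0 ≤ s) (hs₁ : s ≤ 1)
    (hf : 2 * ‖f‖ ≤ (1 + s) * ‖w‖) : ‖f - s • w‖ ≤ ‖f - w‖ := by
  have hinner : inner ℝ f w ≤ ‖f‖ * ‖w‖ := real_inner_le_norm f w
  -- `‖f - w‖² - ‖f - s w‖² = (1 - s) ((1 + s) ‖w‖² - 2 ⟪f, w⟫)`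
  have hsq : ‖f - s • w‖ ^ 2 ≤ ‖f - w‖ ^ 2 := by
    rw [norm_sub_sq_real, norm_sub_sq_real, real_inner_smul_right, norm_smul,
      Real.norm_eq_abs, abs_of_nonneg hs₀]
    nlinarith [mul_le_mul_of_nonneg_left hinner (sub_nonneg.mpr hs₁),
      mul_le_mul_of_nonneg_left hf (mul_nonneg (sub_nonneg.mpr hs₁) (norm_nonneg w))]
  exact (pow_le_pow_iff_left₀ (norm_nonneg _) (norm_nonneg _) two_ne_zero).mp hsq

theorem exists_norm_eq_forall_norm_sub_le {w : E} {ρ : ℝ} (hρ : ρ ≤ ‖w‖) :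
    ∃ z : E, ‖z‖ = max (2 * ρ - ‖w‖) 0 ∧ ∀ f : E, ‖f‖ ≤ ρ → ‖f - z‖ ≤ ‖f - w‖ := by
  rcases eq_or_ne w 0 with rfl | hw
  · refine ⟨0, ?_, fun f _ => le_rfl⟩
    rw [norm_zero] at hρ ⊢
    exact (max_eq_right (by linarith)).symm
  have hw₀ : 0 < ‖w‖ := norm_pos_iff.mpr hw
  set t := max (2 * ρ - ‖w‖) 0
  have ht₀ : 0 ≤ t := le_max_right _ _
  have htw : t ≤ ‖w‖ := max_le (by linarith) hw₀.le
  refine ⟨(t / ‖w‖) • w, ?_, fun f hf => norm_sub_smul_le_norm_sub (by positivity)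
    ((div_le_one hw₀).mpr htw) ?_⟩
  · rw [norm_smul, Real.norm_of_nonneg (by positivity), div_mul_cancel₀ t hw₀.ne']
  · rw [add_mul, one_mul, div_mul_cancel₀ t hw₀.ne']
    linarith [le_max_left (2 * ρ - ‖w‖) 0]

end Shrink

section Ellipse

variable {E : Type*} [NormedAddCommGroup E]

def ellipse (C : ℝ → E) (a b : ℝ) : Set E := {p | ‖C a - p‖ + ‖C b - p‖ ≤ b - a}

theorem right_mem_ellipse {C : ℝ → E} {a b : ℝ} (h : ‖C a - C b‖ ≤ b - a) :
    C b ∈ ellipse C a b := by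
  simpa [ellipse] using h

theorem mem_ellipse_of_norm_sub_le {C : ℝ → E} {x₁ x₂ x₃ x₄ : ℝ} {p₁ p₂ z : E}
    (hp₁ : p₁ ∈ ellipse C x₁ x₂) (hp₂ : p₂ ∈ ellipse C x₃ x₄)
    (h₂₃ : ‖C x₂ - C x₃‖ ≤ x₃ - x₂)
    (hz₁ : ‖p₁ - z‖ ≤ ‖p₁ - C x₂‖) (hz₂ : ‖p₂ - z‖ ≤ ‖p₂ - C x₂‖) :
    z ∈ ellipse C x₁ x₄ := by
  have h₁ := norm_sub_le_norm_sub_add_norm_sub (C x₁) p₁ z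
  have h₄ := norm_sub_le_norm_sub_add_norm_sub (C x₄) p₂ z
  have h₂ := norm_sub_le_norm_sub_add_norm_sub p₂ (C x₃) (C x₂)
  rw [norm_sub_rev p₁ (C x₂)] at hz₁
  rw [norm_sub_rev p₂ (C x₃), norm_sub_rev (C x₃) (C x₂)] at h₂
  simp only [ellipse, mem_ofPred_eq] at hp₁ hp₂ ⊢
  linarith

end Ellipse

theorem closestPossible_le_norm {C : ℝ → EuclideanSpace ℝ (Fin 2)} {a b : ℝ}
    {p : EuclideanSpace ℝ (Fin 2)} (hp : p ∈ ellipse C a b) : closestPossible C a b ≤ ‖p‖ :=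
  csInf_le ⟨0, by rintro _ ⟨q, -, rfl⟩; exact norm_nonneg q⟩ (mem_image_of_mem _ hp)

theorem exists_mem_ellipse_norm_lt {C : ℝ → EuclideanSpace ℝ (Fin 2)} {a b c : ℝ}
    (hab : ‖C a - C b‖ ≤ b - a) (hc : closestPossible C a b < c) :
    ∃ p ∈ ellipse C a b, ‖p‖ < c := by
  obtain ⟨_, ⟨p, hp, rfl⟩, hpc⟩ :=
    exists_lt_of_csInf_lt ⟨_, mem_image_of_mem _ (right_mem_ellipse hab)⟩ hc
  exact ⟨p, hp, hpc⟩

theorem norm_sub_le_sub_of_le {C : ℝ → EuclideanSpace ℝ (Fin 2)}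
    (hC : ∀ a ∈ Icc (0:ℝ) 1, ∀ b ∈ Icc (0:ℝ) 1, ‖C a - C b‖ ≤ |a - b|)
    {a b : ℝ} (ha : a ∈ Icc (0:ℝ) 1) (hb : b ∈ Icc (0:ℝ) 1) (hab : a ≤ b) :
    ‖C a - C b‖ ≤ b - a := by
  simpa [abs_sub_comm a b, abs_of_nonneg (sub_nonneg.mpr hab)] using hC a ha b hb

theorem stmt_5 (C : ℝ → EuclideanSpace ℝ (Fin 2))
    (hC : ∀ a ∈ Set.Icc (0:ℝ) 1, ∀ b ∈ Set.Icc (0:ℝ) 1, ‖C a - C b‖ ≤ |a - b|)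
    (x₁ x₂ x₃ x₄ : ℝ) (h0 : 0 ≤ x₁) (h1 : x₁ ≤ x₂) (h2 : x₂ ≤ x₃)
    (h3 : x₃ ≤ x₄) (h4 : x₄ ≤ 1)
    (ε d : ℝ) (hε : 0 < ε / 2) (hεd : ε / 2 < d)
    (hcp1 : closestPossible C x₁ x₂ ≤ d) (hcp2 : closestPossible C x₃ x₄ ≤ d)
    (hx2 : ‖C x₂‖ > d + ε / 2) :
    closestPossible C x₁ x₄ < d - ε / 2 := by
  have hx : ∀ {a b}, x₁ ≤ a → a ≤ b → b ≤ x₄ → ‖C a - C b‖ ≤ b - a := fun ha hab hb =>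
    norm_sub_le_sub_of_le hC ⟨by linarith, by linarith⟩ ⟨by linarith, by linarith⟩ hab
  set ρ := d + (‖C x₂‖ - d - ε / 2) / 4 with hρ
  obtain ⟨p₁, hp₁, hp₁ρ⟩ := exists_mem_ellipse_norm_lt (c := ρ)
    (hx le_rfl h1 (by linarith)) (hcp1.trans_lt (by linarith [hρ]))
  obtain ⟨p₂, hp₂, hp₂ρ⟩ := exists_mem_ellipse_norm_lt (c := ρ)
    (hx (by linarith) h3 le_rfl) (hcp2.trans_lt (by linarith [hρ]))
  obtain ⟨z, hz, hcloser⟩ :=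
    exists_norm_eq_forall_norm_sub_le (w := C x₂) (ρ := ρ) (by linarith [hρ])
  have hzE : z ∈ ellipse C x₁ x₄ := mem_ellipse_of_norm_sub_le hp₁ hp₂
    (hx h1 h2 (by linarith)) (hcloser p₁ hp₁ρ.le) (hcloser p₂ hp₂ρ.le)
  calc closestPossible C x₁ x₄ ≤ ‖z‖ := closestPossible_le_norm hzE
    _ < d - ε / 2 := by rw [hz]; exact max_lt (by linarith [hρ]) (by linarith)
end

section
/- Let A, B ∈ ℝ² with ‖A‖ = ‖B‖ = 1 and let a > 0. Let Q be the point on the bisector of angle AOB (O the origin) with ‖Q‖ = 1 + a, and let P be the point on ray OB with ‖P‖ = 1 + 8a/5. Then ‖A − Q‖ + ‖Q − B‖ ≥ ‖A − P‖. -/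
set_option maxHeartbeats 1000000

open RealInnerProductSpace

theorem stmt_12 (A B : EuclideanSpace ℝ (Fin 2)) (hA : ‖A‖ = 1) (hB : ‖B‖ = 1)
    (hAB : A ≠ -B) (a : ℝ) (ha : 0 < a)
    (Q P : EuclideanSpace ℝ (Fin 2))
    (hQ : Q = (1 + a) • (‖A + B‖⁻¹ • (A + B)))
    (hP : P = (1 + 8 * a / 5) • B) :
    ‖A - Q‖ + ‖Q - B‖ ≥ ‖A - P‖ := by
  have hAB' : A + B ≠ 0 := by
    intro h
    exact hAB (by rw [eq_neg_of_add_eq_zero_left h])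
  have hs : (0:ℝ) < ‖A + B‖ := norm_pos_iff.mpr hAB'
  set s := ‖A + B‖ with hsdef
  set ib := ⟪A, B⟫ with hib
  have hiA : ⟪A, A⟫ = 1 := by
    rw [real_inner_self_eq_norm_sq, hA]; norm_num
  have hiB : ⟪B, B⟫ = 1 := by
    rw [real_inner_self_eq_norm_sq, hB]; norm_num
  have hs2 : s ^ 2 = 2 + 2 * ib := by
    rw [hsdef, norm_add_sq_real, hA, hB]; ring
  have hsle : s ≤ 2 := by
    calc s ≤ ‖A‖ + ‖B‖ := norm_add_le _ _
    _ = 2 := by rw [hA, hB]; norm_num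
  have hQnorm : ‖Q‖ = 1 + a := by
    rw [hQ, norm_smul, norm_smul, norm_inv, Real.norm_eq_abs, Real.norm_eq_abs,
      abs_of_nonneg (norm_nonneg _), ← hsdef]
    rw [abs_of_pos (by linarith)]
    field_simp
  have hkey : s⁻¹ * (1 + ib) = s / 2 := by
    field_simp
    nlinarith [hs2]
  have hAQ : ⟪A, Q⟫ = (1 + a) * (s / 2) := by
    rw [hQ, real_inner_smul_right, real_inner_smul_right, inner_add_right, hiA, ← hib]
    rw [hkey]
  have hBQ : ⟪Q, B⟫ = (1 + a) * (s / 2) := by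
    rw [hQ, real_inner_smul_left, real_inner_smul_left, inner_add_left, hiB, ← hib,
      add_comm (ib:ℝ) 1]
    rw [hkey]
  have hE1 : ‖A - Q‖ ^ 2 = 1 + (1 + a) ^ 2 - (1 + a) * s := by
    rw [norm_sub_sq_real, hA, hQnorm, hAQ]; ring
  have hE1' : ‖Q - B‖ ^ 2 = 1 + (1 + a) ^ 2 - (1 + a) * s := by
    rw [norm_sub_sq_real, hB, hQnorm, hBQ]; ring
  have hE2 : ‖A - P‖ ^ 2 = 1 + (1 + 8 * a / 5) ^ 2 - (1 + 8 * a / 5) * (s ^ 2 - 2) := by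
    rw [norm_sub_sq_real, hP, real_inner_smul_right, ← hib, norm_smul, Real.norm_eq_abs,
      abs_of_pos (by linarith), hA, hB]
    nlinarith [hs2]
  have hxy : ‖A - Q‖ = ‖Q - B‖ := by
    rw [← Real.sqrt_sq (norm_nonneg (A - Q)), ← Real.sqrt_sq (norm_nonneg (Q - B)), hE1, hE1']
  have hsq : ‖A - P‖ ^ 2 ≤ (‖A - Q‖ + ‖Q - B‖) ^ 2 := by
    rw [← hxy]
    have h4 : ‖A - P‖ ^ 2 ≤ 4 * (‖A - Q‖ ^ 2) := by
      rw [hE1, hE2]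
      nlinarith [sq_nonneg ((10 + 16 * a) * (2 - s) - 12 * a), mul_pos ha ha,
        mul_pos (mul_pos ha ha) ha, hs, hsle]
    nlinarith [h4]
  nlinarith [hsq, norm_nonneg (A - P), norm_nonneg (A - Q), norm_nonneg (Q - B)]
end

section
/- Let C : [0,1] → ℝ² be the constant curve C(x) = p for all x, where ‖p‖ > ε > 0. Then every proof set P for the nearest-point problem with tolerance ε satisfies: any two consecutive elements of P differ by at most 2ε, and hence |P| ≥ 1/(2ε). -/
theorem sum_succ_sub_castSucc {G : Type*} [AddCommGroup G] {n : ℕ} (f : Fin (n + 1) → G) :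
    ∑ i : Fin n, (f i.succ - f i.castSucc) = f (Fin.last n) - f 0 := by
  induction n with
  | zero => simp
  | succ n ih =>
    rw [Fin.sum_univ_castSucc]
    simp only [Fin.succ_castSucc, ih fun i => f i.castSucc]
    simp

theorem exists_norm_sub_le_norm_eq_max {E : Type*} [NormedAddCommGroup E] [NormedSpace ℝ E]
    (p : E) {r : ℝ} (hr : 0 ≤ r) : ∃ q : E, ‖p - q‖ ≤ r ∧ ‖q‖ = max (‖p‖ - r) 0 := by
  rcases le_or_gt ‖p‖ r with hpr | hrp
  · exact ⟨0, by simpa using hpr, by simp [hpr]⟩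
  · have hp : 0 < ‖p‖ := hr.trans_lt hrp
    have hc : 0 ≤ 1 - r / ‖p‖ := sub_nonneg.2 ((div_le_one hp).2 hrp.le)
    refine ⟨(1 - r / ‖p‖) • p, ?_, ?_⟩
    · have : p - (1 - r / ‖p‖) • p = (r / ‖p‖) • p := by module
      rw [this, norm_smul, Real.norm_of_nonneg (by positivity), div_mul_cancel₀ _ hp.ne']
    · rw [norm_smul, Real.norm_of_nonneg hc, max_eq_left (by linarith), sub_mul,
        div_mul_cancel₀ _ hp.ne', one_mul]

theorem closestPossible_const_le (p : EuclideanSpace ℝ (Fin 2)) {a b : ℝ} (hab : a ≤ b) :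
    closestPossible (fun _ => p) a b ≤ max (‖p‖ - (b - a) / 2) 0 := by
  obtain ⟨q, hpq, hq⟩ := exists_norm_sub_le_norm_eq_max p (r := (b - a) / 2) (by linarith)
  rw [← hq]
  refine csInf_le ⟨0, ?_⟩ ⟨q, ?_, rfl⟩
  · rintro _ ⟨z, -, rfl⟩
    exact norm_nonneg z
  · show ‖p - q‖ + ‖p - q‖ ≤ b - a
    linarith

theorem stmt_18 (p : EuclideanSpace ℝ (Fin 2)) (ε : ℝ) (hε : 0 < ε) (hp : ‖p‖ > ε)
    (C : ℝ → EuclideanSpace ℝ (Fin 2)) (hC : ∀ x, C x = p)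
    (n : ℕ) (x : Fin (n + 1) → ℝ) (hmono : StrictMono x)
    (hx0 : x 0 = 0) (hxn : x (Fin.last n) = 1)
    (hproof : ∀ i : Fin n, (⨅ j : Fin (n + 1), ‖C (x j)‖) - ε ≤
      closestPossible C (x i.castSucc) (x i.succ)) :
    (∀ i : Fin n, x i.succ - x i.castSucc ≤ 2 * ε) ∧ (1 / (2 * ε) ≤ (n + 1 : ℝ)) := by
  obtain rfl : C = fun _ => p := funext hC
  have hgap (i : Fin n) : x i.succ - x i.castSucc ≤ 2 * ε := by
    have h := (hproof i).trans
      (closestPossible_const_le p (hmono (Fin.castSucc_lt_succ (i := i))).le)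
    rw [ciInf_const] at h
    have := (le_max_iff.1 h).resolve_right (by linarith)
    linarith
  refine ⟨hgap, ?_⟩
  have hlen : (1 : ℝ) ≤ n * (2 * ε) := by
    calc (1 : ℝ) = ∑ i : Fin n, (x i.succ - x i.castSucc) := by
          rw [sum_succ_sub_castSucc, hx0, hxn, sub_zero]
      _ ≤ ∑ _i : Fin n, 2 * ε := Finset.sum_le_sum fun i _ => hgap i
      _ = n * (2 * ε) := by simp
  rw [div_le_iff₀ (by positivity)]
  linarith
end

section
/- Let C : [0,1] → ℝ² be 1-Lipschitz and let P = {0 = x₁ < ⋯ < xₙ = 1} be a proof set for tolerance ε/2 (with ε < d_min = min_x ‖C(x)‖). If x₁' ≤ x₂' in [0,1] satisfy closest-possible(x₁', x₂') < d_min − ε/2, then the open interval (x₁', x₂') contains a point of P. -/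
lemma cp_self (C : ℝ → EuclideanSpace ℝ (Fin 2)) (a : ℝ) :
    closestPossible C a a = ‖C a‖ := by
  unfold closestPossible
  have hset : {p : EuclideanSpace ℝ (Fin 2) | ‖C a - p‖ + ‖C a - p‖ ≤ a - a} = {C a} := by
    ext p
    simp only [Set.mem_setOf_eq, Set.mem_singleton_iff, sub_self]
    constructor
    · intro h
      have h0 : ‖C a - p‖ = 0 := le_antisymm (by linarith [norm_nonneg (C a - p)]) (norm_nonneg _)
      exact (sub_eq_zero.mp (norm_eq_zero.mp h0)).symm
    · rintro rfl; simp
  rw [hset]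
  simp

lemma cp_mono (C : ℝ → EuclideanSpace ℝ (Fin 2))
    (hC : ∀ a ∈ Set.Icc (0:ℝ) 1, ∀ b ∈ Set.Icc (0:ℝ) 1, ‖C a - C b‖ ≤ |a - b|)
    {a a' b' b : ℝ} (ha : 0 ≤ a) (h1 : a ≤ a') (h2 : a' ≤ b') (h3 : b' ≤ b) (hb : b ≤ 1) :
    closestPossible C a b ≤ closestPossible C a' b' := by
  have haI : a ∈ Set.Icc (0:ℝ) 1 := ⟨ha, by linarith⟩
  have ha' : a' ∈ Set.Icc (0:ℝ) 1 := ⟨by linarith, by linarith⟩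
  have hb' : b' ∈ Set.Icc (0:ℝ) 1 := ⟨by linarith, by linarith⟩
  have hbI : b ∈ Set.Icc (0:ℝ) 1 := ⟨by linarith, hb⟩
  apply csInf_le_csInf
  · refine ⟨0, fun y hy => ?_⟩
    obtain ⟨p, _, rfl⟩ := hy
    exact norm_nonneg p
  · refine ⟨‖C a'‖, ⟨C a', ?_, rfl⟩⟩
    simp only [Set.mem_setOf_eq, sub_self, norm_zero, zero_add]
    have := hC a' ha' b' hb'
    rw [abs_sub_comm, abs_of_nonneg (by linarith)] at this
    rw [norm_sub_rev]
    linarith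
  · apply Set.image_mono
    intro p hp
    simp only [Set.mem_setOf_eq] at hp ⊢
    have e1 : ‖C a - p‖ ≤ ‖C a - C a'‖ + ‖C a' - p‖ := by
      have h : C a - p = (C a - C a') + (C a' - p) := by abel
      rw [h]; exact norm_add_le _ _
    have e2 : ‖C b - p‖ ≤ ‖C b - C b'‖ + ‖C b' - p‖ := by
      have h : C b - p = (C b - C b') + (C b' - p) := by abel
      rw [h]; exact norm_add_le _ _
    have l1 : ‖C a - C a'‖ ≤ a' - a := by
      have := hC a haI a' ha'
      rw [abs_sub_comm, abs_of_nonneg (by linarith)] at this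
      linarith
    have l2 : ‖C b - C b'‖ ≤ b - b' := by
      have := hC b hbI b' hb'
      rw [abs_of_nonneg (by linarith)] at this
      linarith
    linarith

theorem stmt_19 (C : ℝ → EuclideanSpace ℝ (Fin 2))
    (hC : ∀ a ∈ Set.Icc (0:ℝ) 1, ∀ b ∈ Set.Icc (0:ℝ) 1, ‖C a - C b‖ ≤ |a - b|)
    (dmin : ℝ)
    (hdmin : (∀ x ∈ Set.Icc (0:ℝ) 1, dmin ≤ ‖C x‖) ∧ ∃ x ∈ Set.Icc (0:ℝ) 1, ‖C x‖ = dmin)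
    (ε : ℝ) (hε : 0 < ε) (hεd : ε < dmin)
    (n : ℕ) (x : Fin (n + 1) → ℝ) (hmono : StrictMono x)
    (hx0 : x 0 = 0) (hxn : x (Fin.last n) = 1)
    (hproof : ∀ i : Fin n, dmin - ε / 2 ≤ closestPossible C (x i.castSucc) (x i.succ))
    (x₁' x₂' : ℝ) (h0 : 0 ≤ x₁') (h12 : x₁' ≤ x₂') (h1 : x₂' ≤ 1)
    (hcp : closestPossible C x₁' x₂' < dmin - ε / 2) :
    ∃ i : Fin (n + 1), x₁' < x i ∧ x i < x₂' := by
  by_contra hcon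
  push_neg at hcon
  rcases eq_or_lt_of_le h12 with heq | hlt
  · -- degenerate case : x₁' = x₂'
    subst heq
    have := cp_self C x₁'
    have hd := hdmin.1 x₁' ⟨h0, h1⟩
    rw [this] at hcp
    linarith
  · -- proper interval
    classical
    set T : Finset (Fin (n + 1)) := Finset.univ.filter (fun j => x j ≤ x₁') with hT
    have hTne : T.Nonempty := ⟨0, by simp [hT, hx0, h0]⟩
    set i := T.max' hTne with hi
    have hiT : i ∈ T := T.max'_mem hTne
    have hix : x i ≤ x₁' := by
      have := hiT; simpa [hT] using this
    have hlast : x (Fin.last n) = 1 := hxn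
    have hine : i ≠ Fin.last n := by
      intro h
      rw [h, hlast] at hix
      linarith
    have hivlt : (i : ℕ) < n := lt_of_le_of_ne (Nat.lt_succ_iff.mp i.isLt) (fun h => hine (Fin.ext h))
    set j : Fin n := ⟨(i : ℕ), hivlt⟩ with hj
    have hcast : j.castSucc = i := by simp [hj, Fin.castSucc]
    have hsuccgt : i < j.succ := by
      rw [Fin.lt_def]
      simp [hj]
    have hxsucc : x₁' < x j.succ := by
      by_contra hle
      push_neg at hle
      have hmem : j.succ ∈ T := by simp [hT, hle]
      exact absurd (T.le_max' _ hmem) (not_le.mpr hsuccgt)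
    have hx2 : x₂' ≤ x j.succ := hcon j.succ hxsucc
    have hb1 : x j.succ ≤ 1 := by
      rw [← hlast]
      exact hmono.monotone (Fin.le_last _)
    have h0a : 0 ≤ x j.castSucc := by
      rw [← hx0]
      exact hmono.monotone (Fin.zero_le _)
    have hmonocp := cp_mono C hC h0a (hcast ▸ hix) hlt.le hx2 hb1
    have := hproof j
    linarith
end
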